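/- (Example 3.3, infinitesimal cocycle.) Let A = ℂ[a,ā] be the commutative polynomial algebra in two variables with monomial basis {a^kā^l}, B = ℂ[b], and let Ψ : A⊗B → B⊗A be the flip, Ψ(x⊗y) = y⊗x. Define ℂ-linear maps μ_A^{(1)} : A⊗A → A and Ψ^{(1)} : A⊗B → B⊗A by μ_A^{(1)}(a^kā^l ⊗ a^rā^s) = l·r·a^{k+r}ā^{l+s} and Ψ^{(1)}(a^kā^l ⊗ b^r) = l·r·b^r⊗a^kā^l − k·r·b^{r+1}⊗a^{k−1}ā^{l+1} (the second term being absent when k = 0). Then the triple (μ_A^{(1)}, Ψ^{(1)}, μ_B^{(1)} = 0) satisfies the 2-cocycle conditions (E1)–(E4), and hence defines an infinitesimal deformation of the tensor product factorisation X(B,A). -/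

import Mathlib

/-!
Both deformation maps are assembled from derivations: on monomials one reads off
`μ_A⁽¹⁾(x ⊗ y) = (ā∂_ā x)(a∂_a y)` and `Ψ⁽¹⁾(x ⊗ u) = b∂_b u ⊗ ā∂_ā x − b²∂_b u ⊗ ā∂_a x`.
In a commutative algebra the product `D₁ x · D₂ y` of two derivations is a Hochschild 2-cocycle,
which is (E1). For the flip twisting, the `μ_A⁽¹⁾`-terms of (E3) and the `μ_B⁽¹⁾`-terms of (E4)
coincide on both sides, and what remains says that `Ψ⁽¹⁾` is a derivation in its `A`-argument,
resp. in its `B`-argument. A tensor product of a derivation with any linear map, precomposed with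
the flip, is a derivation in the corresponding argument, so `Ψ⁽¹⁾` has both properties.
-/

open TensorProduct

section Defs

variable {k : Type*} [CommRing k]
variable {A B : Type*} [AddCommGroup A] [Module k A] [AddCommGroup B] [Module k B]

/-- `(id_B ⊗ μ) ∘ (ψ ⊗ id_A)` as a map `A ⊗ (B ⊗ A) → B ⊗ A`. -/
noncomputable def twL (μ : A ⊗[k] A →ₗ[k] A) (ψ : A ⊗[k] B →ₗ[k] B ⊗[k] A) :
    A ⊗[k] (B ⊗[k] A) →ₗ[k] B ⊗[k] A :=
  LinearMap.lTensor B μ ∘ₗ (TensorProduct.assoc k B A A).toLinearMap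
    ∘ₗ LinearMap.rTensor A ψ ∘ₗ (TensorProduct.assoc k A B A).symm.toLinearMap

/-- `(ν ⊗ id_A) ∘ (id_B ⊗ ψ)` as a map `(B ⊗ A) ⊗ B → B ⊗ A`. -/
noncomputable def twR (ν : B ⊗[k] B →ₗ[k] B) (ψ : A ⊗[k] B →ₗ[k] B ⊗[k] A) :
    (B ⊗[k] A) ⊗[k] B →ₗ[k] B ⊗[k] A :=
  LinearMap.rTensor A ν ∘ₗ (TensorProduct.assoc k B B A).symm.toLinearMap
    ∘ₗ LinearMap.lTensor B ψ ∘ₗ (TensorProduct.assoc k B A B).toLinearMap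

end Defs

/-- `A = ℂ[a,ā]`, the commutative polynomial algebra in two variables, as the
monoid algebra on `ℕ × ℕ`; the monomial `a^k ā^l` is `Finsupp.single (k,l) 1`. -/
abbrev Apoly : Type := AddMonoidAlgebra ℂ (ℕ × ℕ)

/-- `B = ℂ[b]`; the monomial `b^r` is `Finsupp.single r 1`. -/
abbrev Bpoly : Type := AddMonoidAlgebra ℂ ℕ

/-- `μ_A⁽¹⁾(a^k ā^l ⊗ a^r ā^s) = l·r·a^{k+r} ā^{l+s}`. -/
noncomputable def mu1 : Apoly ⊗[ℂ] Apoly →ₗ[ℂ] Apoly :=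
  TensorProduct.lift <|
    (Finsupp.lift (Apoly →ₗ[ℂ] Apoly) ℂ (ℕ × ℕ) fun p =>
      (Finsupp.lift Apoly ℂ (ℕ × ℕ) fun p' =>
        ((p.2 * p'.1 : ℕ) : ℂ) • AddMonoidAlgebra.single (p.1 + p'.1, p.2 + p'.2) (1 : ℂ))
        ∘ₗ (AddMonoidAlgebra.coeffLinearEquiv ℂ).toLinearMap) ∘ₗ (AddMonoidAlgebra.coeffLinearEquiv ℂ).toLinearMap

/-- `Ψ⁽¹⁾(a^k ā^l ⊗ b^r) = l·r·b^r ⊗ a^k ā^l − k·r·b^{r+1} ⊗ a^{k−1} ā^{l+1}`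
(the second term being absent when `k = 0`). -/
noncomputable def psi1 : Apoly ⊗[ℂ] Bpoly →ₗ[ℂ] Bpoly ⊗[ℂ] Apoly :=
  TensorProduct.lift <|
    (Finsupp.lift (Bpoly →ₗ[ℂ] Bpoly ⊗[ℂ] Apoly) ℂ (ℕ × ℕ) fun p =>
      (Finsupp.lift (Bpoly ⊗[ℂ] Apoly) ℂ ℕ fun r =>
        ((p.2 * r : ℕ) : ℂ) •
            ((AddMonoidAlgebra.single r (1 : ℂ) : Bpoly)
              ⊗ₜ[ℂ] (AddMonoidAlgebra.single p (1 : ℂ) : Apoly))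
          - ((p.1 * r : ℕ) : ℂ) •
            ((AddMonoidAlgebra.single (r + 1) (1 : ℂ) : Bpoly)
              ⊗ₜ[ℂ] (AddMonoidAlgebra.single (p.1 - 1, p.2 + 1) (1 : ℂ) : Apoly)))
        ∘ₗ (AddMonoidAlgebra.coeffLinearEquiv ℂ).toLinearMap) ∘ₗ (AddMonoidAlgebra.coeffLinearEquiv ℂ).toLinearMap

namespace AddMonoidAlgebra

variable {R G : Type*} [CommRing R] [AddCommMonoid G]

theorem basis_constr_single (f : G → R[G]) (g : G) (c : R) :
    (basis G R).constr R f (single g c) = c • f g := by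
  rw [show single g c = c • basis G R g by rw [basis_apply, smul_single', mul_one], map_smul,
    Module.Basis.constr_basis]

noncomputable def mkDerivation (f : G → R[G])
    (hf : ∀ g h, f (g + h) = single g 1 * f h + single h 1 * f g) :
    Derivation R R[G] R[G] where
  toLinearMap := (basis G R).constr R f
  map_one_eq_zero' := by
    have h0 := hf 0 0
    simp only [add_zero, ← one_def, one_mul, left_eq_add] at h0
    simp [one_def, basis_constr_single, h0]
  leibniz' x y := by
    induction x using induction_linear with
    | zero => simp
    | add x x' hx hx' => simp only [add_mul, map_add, hx, hx', add_smul, smul_add]; abel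
    | single g c =>
      induction y using induction_linear with
      | zero => simp
      | add y y' hy hy' => simp only [mul_add, map_add, hy, hy', smul_add, add_smul]; abel
      | single h d =>
        rw [← mul_one c, ← mul_one d, ← smul_single', ← smul_single']
        simp only [map_smul, single_mul_single, one_mul, basis_constr_single, hf, smul_eq_mul,
          smul_mul_assoc, mul_smul_comm, smul_add]
        module

@[simp]
theorem mkDerivation_single (f : G → R[G])
    (hf : ∀ g h, f (g + h) = single g 1 * f h + single h 1 * f g) (g : G) (c : R) :
    mkDerivation f hf (single g c) = c • f g :=
  basis_constr_single f g c

noncomputable def gradingDerivation (w : G →+ R) : Derivation R R[G] R[G] :=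
  mkDerivation (fun g => w g • single g 1) fun g h => by
    simp only [map_add, add_smul, mul_smul_comm, single_mul_single, one_mul, add_comm g h]

@[simp]
theorem gradingDerivation_single (w : G →+ R) (g : G) (c : R) :
    gradingDerivation w (single g c) = w g • single g c := by
  rw [gradingDerivation, mkDerivation_single, smul_comm, smul_single', mul_one]

end AddMonoidAlgebra

section FlipTwisting

open LinearMap

variable {k A B : Type*} [CommRing k]

section Modules

variable [AddCommGroup A] [Module k A] [AddCommGroup B] [Module k B]

theorem twL_comm_tmul (μ : A ⊗[k] A →ₗ[k] A) (x y : A) (u : B) :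
    twL μ (TensorProduct.comm k A B).toLinearMap (x ⊗ₜ (u ⊗ₜ y)) = u ⊗ₜ μ (x ⊗ₜ y) := by
  simp [twL]

theorem twR_comm_tmul (ν : B ⊗[k] B →ₗ[k] B) (x : A) (u v : B) :
    twR ν (TensorProduct.comm k A B).toLinearMap ((u ⊗ₜ x) ⊗ₜ v) = ν (u ⊗ₜ v) ⊗ₜ x := by
  simp [twR]

end Modules

variable [CommRing A] [Algebra k A] [CommRing B] [Algebra k B]

theorem Derivation.hochschild_coboundary_mul_comp_map (D₁ D₂ : Derivation k A A) (x y z : A) :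
    letI f := mul' k A ∘ₗ TensorProduct.map (D₁ : A →ₗ[k] A) D₂
    x * f (y ⊗ₜ z) - f ((x * y) ⊗ₜ z) + f (x ⊗ₜ (y * z)) - f (x ⊗ₜ y) * z = 0 := by
  simp only [comp_apply, TensorProduct.map_tmul, mul'_apply, Derivation.coeFn_coe,
    Derivation.leibniz, smul_eq_mul]
  ring

theorem twL_mul'_tmul (ψ : A ⊗[k] B →ₗ[k] B ⊗[k] A) (x y : A) (u : B) :
    twL (mul' k A) ψ (x ⊗ₜ (u ⊗ₜ y)) = lTensor B (mulRight k y) (ψ (x ⊗ₜ u)) := by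
  simp only [twL, comp_apply, LinearEquiv.coe_coe, assoc_symm_tmul, rTensor_tmul]
  induction ψ (x ⊗ₜ u) using TensorProduct.induction_on with
  | zero => simp
  | tmul v z => simp
  | add w w' hw hw' => simp only [add_tmul, map_add, hw, hw']

theorem twL_mul'_comm_tmul (x : A) (w : B ⊗[k] A) :
    twL (mul' k A) (TensorProduct.comm k A B).toLinearMap (x ⊗ₜ w) =
      lTensor B (mulLeft k x) w := by
  induction w using TensorProduct.induction_on with
  | zero => simp
  | tmul v z => simp [twL]
  | add w w' hw hw' => simp only [tmul_add, map_add, hw, hw']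

theorem twR_mul'_tmul (ψ : A ⊗[k] B →ₗ[k] B ⊗[k] A) (x : A) (u v : B) :
    twR (mul' k B) ψ ((u ⊗ₜ x) ⊗ₜ v) = rTensor A (mulLeft k u) (ψ (x ⊗ₜ v)) := by
  simp only [twR, comp_apply, LinearEquiv.coe_coe, assoc_tmul, lTensor_tmul]
  induction ψ (x ⊗ₜ v) using TensorProduct.induction_on with
  | zero => simp
  | tmul v z => simp
  | add w w' hw hw' => simp only [tmul_add, map_add, hw, hw']

theorem twR_mul'_comm_tmul (w : B ⊗[k] A) (v : B) :
    twR (mul' k B) (TensorProduct.comm k A B).toLinearMap (w ⊗ₜ v) =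
      rTensor A (mulRight k v) w := by
  induction w using TensorProduct.induction_on with
  | zero => simp
  | tmul u z => simp [twR]
  | add w w' hw hw' => simp only [add_tmul, map_add, hw, hw']

def IsDerivationLeft (ψ₁ : A ⊗[k] B →ₗ[k] B ⊗[k] A) : Prop :=
  ∀ x y u, ψ₁ ((x * y) ⊗ₜ u) =
    lTensor B (mulRight k y) (ψ₁ (x ⊗ₜ u)) + lTensor B (mulLeft k x) (ψ₁ (y ⊗ₜ u))

def IsDerivationRight (ψ₁ : A ⊗[k] B →ₗ[k] B ⊗[k] A) : Prop :=
  ∀ x u v, ψ₁ (x ⊗ₜ (u * v)) =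
    rTensor A (mulLeft k u) (ψ₁ (x ⊗ₜ v)) + rTensor A (mulRight k v) (ψ₁ (x ⊗ₜ u))

theorem IsDerivationLeft.sub {ψ₁ ψ₂ : A ⊗[k] B →ₗ[k] B ⊗[k] A} (h₁ : IsDerivationLeft ψ₁)
    (h₂ : IsDerivationLeft ψ₂) : IsDerivationLeft (ψ₁ - ψ₂) := by
  intro x y u
  simp only [LinearMap.sub_apply, map_sub, h₁ x y u, h₂ x y u]
  abel

theorem IsDerivationRight.sub {ψ₁ ψ₂ : A ⊗[k] B →ₗ[k] B ⊗[k] A} (h₁ : IsDerivationRight ψ₁)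
    (h₂ : IsDerivationRight ψ₂) : IsDerivationRight (ψ₁ - ψ₂) := by
  intro x u v
  simp only [LinearMap.sub_apply, map_sub, h₁ x u v, h₂ x u v]
  abel

theorem isDerivationLeft_map_comp_comm (β : B →ₗ[k] B) (α : Derivation k A A) :
    IsDerivationLeft
      (TensorProduct.map β (α : A →ₗ[k] A) ∘ₗ (TensorProduct.comm k A B).toLinearMap) := by
  intro x y u
  simp [Derivation.leibniz, tmul_add, mul_comm, add_comm]

theorem isDerivationRight_map_comp_comm (β : Derivation k B B) (α : A →ₗ[k] A) :
    IsDerivationRight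
      (TensorProduct.map (β : B →ₗ[k] B) α ∘ₗ (TensorProduct.comm k A B).toLinearMap) := by
  intro x u v
  simp [Derivation.leibniz, add_tmul, mul_comm]

theorem twL_cocycle_of_isDerivationLeft {ψ₁ : A ⊗[k] B →ₗ[k] B ⊗[k] A}
    (h : IsDerivationLeft ψ₁) (μ₁ : A ⊗[k] A →ₗ[k] A) (x y : A) (u : B) :
    letI ψ := (TensorProduct.comm k A B).toLinearMap
    twL (mul' k A) ψ₁ (x ⊗ₜ ψ (y ⊗ₜ u)) + twL (mul' k A) ψ (x ⊗ₜ ψ₁ (y ⊗ₜ u))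
        + twL μ₁ ψ (x ⊗ₜ ψ (y ⊗ₜ u))
      = ψ₁ ((x * y) ⊗ₜ u) + ψ (μ₁ (x ⊗ₜ y) ⊗ₜ u) := by
  simp only [LinearEquiv.coe_coe, comm_tmul, twL_mul'_tmul, twL_mul'_comm_tmul, twL_comm_tmul,
    h x y u]

theorem twR_cocycle_of_isDerivationRight {ψ₁ : A ⊗[k] B →ₗ[k] B ⊗[k] A}
    (h : IsDerivationRight ψ₁) (ν₁ : B ⊗[k] B →ₗ[k] B) (x : A) (u v : B) :
    letI ψ := (TensorProduct.comm k A B).toLinearMap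
    twR (mul' k B) ψ₁ (ψ (x ⊗ₜ u) ⊗ₜ v) + twR (mul' k B) ψ (ψ₁ (x ⊗ₜ u) ⊗ₜ v)
        + twR ν₁ ψ (ψ (x ⊗ₜ u) ⊗ₜ v)
      = ψ₁ (x ⊗ₜ (u * v)) + ψ (x ⊗ₜ ν₁ (u ⊗ₜ v)) := by
  simp only [LinearEquiv.coe_coe, comm_tmul, twR_mul'_tmul, twR_mul'_comm_tmul, twR_comm_tmul,
    h x u v]

end FlipTwisting

open AddMonoidAlgebra

noncomputable def aDa : Derivation ℂ Apoly Apoly :=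
  gradingDerivation ((Nat.castAddMonoidHom ℂ).comp (AddMonoidHom.fst ℕ ℕ))

noncomputable def abarDabar : Derivation ℂ Apoly Apoly :=
  gradingDerivation ((Nat.castAddMonoidHom ℂ).comp (AddMonoidHom.snd ℕ ℕ))

-- The truncated `p.1 - 1` is harmless: at `p.1 = 0` the coefficient vanishes.
noncomputable def abarDa : Derivation ℂ Apoly Apoly :=
  mkDerivation (fun p => single (p.1 - 1, p.2 + 1) (p.1 : ℂ)) fun p q => by
    obtain ⟨k, l⟩ := p
    obtain ⟨r, s⟩ := q
    rcases k with _ | k <;> rcases r with _ | r <;>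
      simp only [Prod.mk_add_mk, single_mul_single, one_mul, Nat.cast_zero, single_zero, mul_zero,
        add_zero, zero_add, ← add_assoc, Nat.add_sub_cancel]
    · rw [add_comm s l]
    · simp only [add_comm, add_left_comm, ← single_add]
      congr 1
      push_cast
      ring

noncomputable def bDb : Derivation ℂ Bpoly Bpoly :=
  gradingDerivation (Nat.castAddMonoidHom ℂ)

noncomputable def bbDb : Derivation ℂ Bpoly Bpoly :=
  (single 1 1 : Bpoly) • bDb

theorem aDa_single (p : ℕ × ℕ) : aDa (single p 1) = (p.1 : ℂ) • single p 1 := by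
  simp [aDa]

theorem abarDabar_single (p : ℕ × ℕ) : abarDabar (single p 1) = (p.2 : ℂ) • single p 1 := by
  simp [abarDabar]

theorem abarDa_single (p : ℕ × ℕ) :
    abarDa (single p 1) = (p.1 : ℂ) • single (p.1 - 1, p.2 + 1) 1 := by
  simp [abarDa]

theorem bDb_single (r : ℕ) : bDb (single r 1) = (r : ℂ) • single r 1 := by
  simp [bDb]

theorem bbDb_single (r : ℕ) : bbDb (single r 1) = (r : ℂ) • single (r + 1) 1 := by
  simp [bbDb, bDb, single_mul_single, add_comm]

theorem mu1_single_tmul_single (p q : ℕ × ℕ) :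
    mu1 (single p 1 ⊗ₜ single q 1) = ((p.2 * q.1 : ℕ) : ℂ) • single (p + q) 1 := by
  simp only [mu1, lift.tmul, LinearMap.comp_apply, LinearEquiv.coe_coe, coeffLinearEquiv_apply,
    coeff_single, Finsupp.lift_apply, Finsupp.sum_single_index, zero_smul, one_smul]
  rfl

theorem psi1_single_tmul_single (p : ℕ × ℕ) (r : ℕ) :
    psi1 (single p 1 ⊗ₜ single r 1) = ((p.2 * r : ℕ) : ℂ) • (single r 1 ⊗ₜ single p 1)
      - ((p.1 * r : ℕ) : ℂ) • (single (r + 1) 1 ⊗ₜ single (p.1 - 1, p.2 + 1) 1) := by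
  simp only [psi1, lift.tmul, LinearMap.comp_apply, LinearEquiv.coe_coe, coeffLinearEquiv_apply,
    coeff_single, Finsupp.lift_apply, Finsupp.sum_single_index, zero_smul, one_smul]

theorem mu1_eq_mul'_comp_map :
    mu1 = LinearMap.mul' ℂ Apoly ∘ₗ TensorProduct.map (abarDabar : Apoly →ₗ[ℂ] Apoly) aDa := by
  ext p q : 5
  simp only [AlgebraTensorModule.curry_apply, curry_apply, LinearMap.restrictScalars_apply,
    LinearMap.comp_apply, lsingle_apply, mu1_single_tmul_single, TensorProduct.map_tmul,
    Derivation.coeFn_coe, abarDabar_single, aDa_single, LinearMap.mul'_apply, smul_mul_smul,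
    single_mul_single, mul_one]
  push_cast
  rfl

theorem psi1_eq_sub :
    psi1 = TensorProduct.map (bDb : Bpoly →ₗ[ℂ] Bpoly) abarDabar
          ∘ₗ (TensorProduct.comm ℂ Apoly Bpoly).toLinearMap
        - TensorProduct.map (bbDb : Bpoly →ₗ[ℂ] Bpoly) abarDa
          ∘ₗ (TensorProduct.comm ℂ Apoly Bpoly).toLinearMap := by
  ext p r : 5
  simp only [AlgebraTensorModule.curry_apply, curry_apply, LinearMap.restrictScalars_apply,
    LinearMap.comp_apply, LinearMap.sub_apply, lsingle_apply, psi1_single_tmul_single,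
    LinearEquiv.coe_coe, comm_tmul, TensorProduct.map_tmul, Derivation.coeFn_coe,
    abarDabar_single, abarDa_single, bDb_single, bbDb_single, smul_tmul_smul]
  push_cast
  ring_nf

/-- Example 3.3, infinitesimal cocycle: the triple
`(μ_A⁽¹⁾, Ψ⁽¹⁾, μ_B⁽¹⁾ = 0)` satisfies the 2-cocycle conditions (E1)–(E4). -/
theorem polynomial_infinitesimal_cocycle :
    letI μA := LinearMap.mul' ℂ Apoly
    letI μB := LinearMap.mul' ℂ Bpoly
    letI ψ : Apoly ⊗[ℂ] Bpoly →ₗ[ℂ] Bpoly ⊗[ℂ] Apoly :=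
      (TensorProduct.comm ℂ Apoly Bpoly).toLinearMap
    letI ν₁ : Bpoly ⊗[ℂ] Bpoly →ₗ[ℂ] Bpoly := 0
    -- (E1)
    (∀ x y z : Apoly,
        x * mu1 (y ⊗ₜ[ℂ] z) - mu1 ((x * y) ⊗ₜ[ℂ] z)
          + mu1 (x ⊗ₜ[ℂ] (y * z)) - mu1 (x ⊗ₜ[ℂ] y) * z = 0) ∧
    -- (E2), for μ_B⁽¹⁾ = 0
    (∀ u v w : Bpoly,
        u * ν₁ (v ⊗ₜ[ℂ] w) - ν₁ ((u * v) ⊗ₜ[ℂ] w)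
          + ν₁ (u ⊗ₜ[ℂ] (v * w)) - ν₁ (u ⊗ₜ[ℂ] v) * w = 0) ∧
    -- (E3)
    (∀ (x y : Apoly) (u : Bpoly),
        twL μA psi1 (x ⊗ₜ[ℂ] ψ (y ⊗ₜ[ℂ] u))
          + twL μA ψ (x ⊗ₜ[ℂ] psi1 (y ⊗ₜ[ℂ] u))
          + twL mu1 ψ (x ⊗ₜ[ℂ] ψ (y ⊗ₜ[ℂ] u))
        = psi1 ((x * y) ⊗ₜ[ℂ] u) + ψ (mu1 (x ⊗ₜ[ℂ] y) ⊗ₜ[ℂ] u)) ∧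
    -- (E4)
    (∀ (x : Apoly) (u v : Bpoly),
        twR μB psi1 (ψ (x ⊗ₜ[ℂ] u) ⊗ₜ[ℂ] v)
          + twR μB ψ (psi1 (x ⊗ₜ[ℂ] u) ⊗ₜ[ℂ] v)
          + twR ν₁ ψ (ψ (x ⊗ₜ[ℂ] u) ⊗ₜ[ℂ] v)
        = psi1 (x ⊗ₜ[ℂ] (u * v)) + ψ (x ⊗ₜ[ℂ] ν₁ (u ⊗ₜ[ℂ] v))) := by
  have hL : IsDerivationLeft psi1 := psi1_eq_sub ▸
    (isDerivationLeft_map_comp_comm _ _).sub (isDerivationLeft_map_comp_comm _ _)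
  have hR : IsDerivationRight psi1 := psi1_eq_sub ▸
    (isDerivationRight_map_comp_comm _ _).sub (isDerivationRight_map_comp_comm _ _)
  refine ⟨fun x y z => ?_, fun u v w => by simp, twL_cocycle_of_isDerivationLeft hL mu1,
    twR_cocycle_of_isDerivationRight hR 0⟩
  rw [mu1_eq_mul'_comp_map]
  exact Derivation.hochschild_coboundary_mul_comp_map _ _ x y z
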